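/- arXiv:2104.03570 — 2 statements merged into one kernel-verified Lean document; each statement's English description precedes it below -/
import Mathlib

section
/- Let p ≥ 2 and let γ : S¹ → ℝ² be a closed curve of class W^{2,p}. Then its length satisfies the lower bound L(γ) ≥ [ (2π)^p / (p E_p(γ)) ]^{1/(p−1)}. -/
open MeasureTheory Filter Real Set intervalIntegral RealInnerProductSpace

noncomputable section

/-- The plane `ℝ²` as a Euclidean space. -/
abbrev V2 : Type := EuclideanSpace ℝ (Fin 2)

/-- Rotation by `π/2` in the plane. -/
def Rot (v : V2) : V2 := (WithLp.equiv 2 (Fin 2 → ℝ)).symm ![-(v 1), v 0]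

/-- A closed curve of class `W^{2,p}(S¹;ℝ²)`, presented as a `1`-periodic function on `ℝ`
together with its first derivative (classical, since `W^{2,p} ⊂ C¹`) and its second
(weak) derivative, which lies in `L^p`. -/
structure CurveW2p (p : ℝ) where
  f : ℝ → V2
  f' : ℝ → V2
  f'' : ℝ → V2
  per : Function.Periodic f 1
  per' : Function.Periodic f' 1
  per'' : Function.Periodic f'' 1
  hf' : ∀ x, HasDerivAt f (f' x) x
  hf'' : ∀ x, f' x = f' 0 + ∫ u in (0:ℝ)..x, f'' u
  memLp : MemLp f'' (ENNReal.ofReal p) (volume.restrict (Set.Ioc (0:ℝ) 1))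

namespace CurveW2p

variable {p : ℝ}

/-- The length of a closed curve. -/
def len (γ : CurveW2p p) : ℝ := ∫ x in (0:ℝ)..1, ‖γ.f' x‖

/-- The `p`-elastic energy `E_p(γ) = (1/p) ∫ |κ|^p ds`, written in an arbitrary
parametrisation: `κ = ⟨γ'', R γ'⟩ / |γ'|³` and `ds = |γ'| dx`. -/
def Ep (p : ℝ) (γ : CurveW2p p) : ℝ :=
  (1/p) * ∫ x in (0:ℝ)..1, |⟪γ.f'' x, Rot (γ.f' x)⟫| ^ p / ‖γ.f' x‖ ^ (3*p - 1)

/-- The modified `p`-elastic energy `𝓔_p(γ) = E_p(γ) + λ L(γ)`. -/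
def Emod (p lam : ℝ) (γ : CurveW2p p) : ℝ := Ep p γ + lam * γ.len

/-- Constant parametrisation: `|∂ₓγ(x)| ≡ L(γ)`; membership in the admissible class `AC`. -/
def constSpeed (γ : CurveW2p p) : Prop := ∀ x, ‖γ.f' x‖ = γ.len

/-- The signed curvature of a constant-speed curve. -/
def curv (γ : CurveW2p p) (x : ℝ) : ℝ := ⟪γ.f'' x, Rot (γ.f' x)⟫ / γ.len ^ 3

/-- A substitute for the `W^{2,p}(S¹)` norm. -/
def W2pNorm (p : ℝ) (γ : CurveW2p p) : ℝ :=
  (∫ x in (0:ℝ)..1, ‖γ.f x‖ ^ p) ^ (1/p) + (∫ x in (0:ℝ)..1, ‖γ.f' x‖ ^ p) ^ (1/p)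
    + (∫ x in (0:ℝ)..1, ‖γ.f'' x‖ ^ p) ^ (1/p)

end CurveW2p

open CurveW2p

/-- The penalisation `P_n(γ, γ̃) = (L(γ̃)/(2τ)) ∫₀¹ |γ − γ̃|² dx`. -/
def Pfun {p : ℝ} (tau : ℝ) (γ γt : CurveW2p p) : ℝ :=
  (γt.len / (2*tau)) * ∫ x in (0:ℝ)..1, ‖γ.f x - γt.f x‖^2

/-- The minimizing-movement functional `G(γ) = 𝓔_p(γ) + P_n(γ, γ̃)`. -/
def Gfun (p lam tau : ℝ) (γt γ : CurveW2p p) : ℝ := Emod p lam γ + Pfun tau γ γt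

/-- `γm` minimises `G = 𝓔_p + P_n(·, γprev)` over the admissible class `AC`. -/
def IsMinimizer (p lam tau : ℝ) (γprev γm : CurveW2p p) : Prop :=
  constSpeed γm ∧ ∀ γ : CurveW2p p, constSpeed γ →
    Gfun p lam tau γprev γm ≤ Gfun p lam tau γprev γ

/-- A minimizing-movements chain `γ_{0,n} = γ₀`, `γ_{i,n}` minimising
`𝓔_p(·) + P_n(·, γ_{i−1,n})` over `AC`, for `1 ≤ i ≤ n`, with time step `τ_n = T/n`. -/
def IsMMChain (p lam T : ℝ) (n : ℕ) (γ0 : CurveW2p p) (γseq : ℕ → CurveW2p p) : Prop :=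
  γseq 0 = γ0 ∧ ∀ i, 1 ≤ i → i ≤ n → IsMinimizer p lam (T/n) (γseq (i-1)) (γseq i)

/-- The function `Φ₁(γ,η)(x) = (1/L(γ)²)(x∫₀¹ γ'·η' − ∫₀ˣ γ'·η')`. -/
def Phi1 {p : ℝ} (γ η : CurveW2p p) (x : ℝ) : ℝ :=
  (1 / γ.len^2) * (x * ∫ u in (0:ℝ)..1, ⟪γ.f' u, η.f' u⟫
      - ∫ u in (0:ℝ)..x, ⟪γ.f' u, η.f' u⟫)

/-- `g : ℝ → ℝ²` (1-periodic) belongs to the admissible class `AC`: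
it is `W^{2,p}` with `|g'| ≡ L(g)`. -/
def InAC (p : ℝ) (g : ℝ → V2) : Prop :=
  ∃ γ : CurveW2p p, γ.f = g ∧ constSpeed γ

/-- Piecewise linear interpolation of a minimizing-movements chain (position). -/
def plin (p T : ℝ) (n : ℕ) (γseq : ℕ → CurveW2p p) (t x : ℝ) : V2 :=
  ((γseq (⌊t / (T/n)⌋.toNat)).f x) +
    ((t - (⌊t / (T/n)⌋.toNat : ℝ) * (T/n)) / (T/n)) •
      ((γseq (⌊t / (T/n)⌋.toNat + 1)).f x - (γseq (⌊t / (T/n)⌋.toNat)).f x)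

/-- Piecewise linear interpolation: first spatial derivative. -/
def plin1 (p T : ℝ) (n : ℕ) (γseq : ℕ → CurveW2p p) (t x : ℝ) : V2 :=
  ((γseq (⌊t / (T/n)⌋.toNat)).f' x) +
    ((t - (⌊t / (T/n)⌋.toNat : ℝ) * (T/n)) / (T/n)) •
      ((γseq (⌊t / (T/n)⌋.toNat + 1)).f' x - (γseq (⌊t / (T/n)⌋.toNat)).f' x)

/-- Piecewise linear interpolation: second spatial derivative. -/
def plin2 (p T : ℝ) (n : ℕ) (γseq : ℕ → CurveW2p p) (t x : ℝ) : V2 :=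
  ((γseq (⌊t / (T/n)⌋.toNat)).f'' x) +
    ((t - (⌊t / (T/n)⌋.toNat : ℝ) * (T/n)) / (T/n)) •
      ((γseq (⌊t / (T/n)⌋.toNat + 1)).f'' x - (γseq (⌊t / (T/n)⌋.toNat)).f'' x)

/-- The piecewise constant velocity `V_n(·,t) = (γ_{i,n} − γ_{i−1,n})/τ_n`. -/
def pconstV (p T : ℝ) (n : ℕ) (γseq : ℕ → CurveW2p p) (t x : ℝ) : V2 :=
  (T/n)⁻¹ • ((γseq (⌊t / (T/n)⌋.toNat + 1)).f x - (γseq (⌊t / (T/n)⌋.toNat)).f x)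

/-- Right-endpoint piecewise constant interpolation `γ̃_n(·,t) = γ_{i,n}` on `((i−1)τ_n, iτ_n]`. -/
def pconstR (p T : ℝ) (n : ℕ) (γseq : ℕ → CurveW2p p) (t : ℝ) : CurveW2p p :=
  γseq (⌈t / (T/n)⌉.toNat)

/-- Left-endpoint piecewise constant interpolation `Γ̃_n(·,t) = γ_{i−1,n}` on `((i−1)τ_n, iτ_n]`. -/
def pconstL (p T : ℝ) (n : ℕ) (γseq : ℕ → CurveW2p p) (t : ℝ) : CurveW2p p :=
  γseq (⌈t / (T/n)⌉.toNat - 1)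

/-- Weak convergence on the space–time cylinder `(0,T) × S¹`, tested against
continuous test functions. -/
def WeakConvCyl (T : ℝ) (g : ℕ → ℝ → ℝ → V2) (glim : ℝ → ℝ → V2) : Prop :=
  ∀ η : ℝ → ℝ → V2, Continuous (Function.uncurry η) →
    Tendsto (fun k => ∫ t in (0:ℝ)..T, ∫ x in (0:ℝ)..1, ⟪g k t x, η t x⟫) atTop
      (nhds (∫ t in (0:ℝ)..T, ∫ x in (0:ℝ)..1, ⟪glim t x, η t x⟫))

/-- The conclusion of the compactness step (Lemma 3.9): `γ` (as the family `Γ` of curves,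
with velocity `v`) is a subsequential limit of the minimizing-movements interpolations:
weak-* in `L^∞(0,T;W^{2,p})` (uniform bound plus distributional convergence of `γ_n` and
its spatial derivatives) and weak in `H¹(0,T;L²)`. -/
structure IsMMLimit (p lam T : ℝ) (γ0 : CurveW2p p) (γseq : ℕ → ℕ → CurveW2p p)
    (Γ : ℝ → CurveW2p p) (v : ℝ → ℝ → V2) (φ : ℕ → ℕ) : Prop where
  chain : ∀ n, 1 ≤ n → IsMMChain p lam T n γ0 (γseq n)
  mono : StrictMono φ
  hφ : ∀ k, 1 ≤ φ k
  conv0 : WeakConvCyl T (fun k => plin p T (φ k) (γseq (φ k))) (fun t x => (Γ t).f x)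
  conv1 : WeakConvCyl T (fun k => plin1 p T (φ k) (γseq (φ k))) (fun t x => (Γ t).f' x)
  conv2 : WeakConvCyl T (fun k => plin2 p T (φ k) (γseq (φ k))) (fun t x => (Γ t).f'' x)
  bound : ∃ M, ∀ t ∈ Set.Icc (0:ℝ) T, W2pNorm p (Γ t) ≤ M
  convV : WeakConvCyl T (fun k => pconstV p T (φ k) (γseq (φ k))) v
  measv : Measurable fun q : ℝ × ℝ => v q.1 q.2
  vL2 : IntegrableOn (fun q : ℝ × ℝ => ‖v q.1 q.2‖^2)
      (Set.Ioc (0:ℝ) T ×ˢ Set.Ioc (0:ℝ) 1) volume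
  ft : ∀ t ∈ Set.Icc (0:ℝ) T, ∀ x, (Γ t).f x = γ0.f x + ∫ s in (0:ℝ)..t, v s x

/-- The space–time weak form of the `p`-elastic flow (with constant parametrisation),
tested against `η ∈ L^∞(0,T;W^{2,p})`. -/
def weakForm (p lam T : ℝ) (Γ : ℝ → CurveW2p p) (v : ℝ → ℝ → V2)
    (η : ℝ → CurveW2p p) : ℝ :=
  ∫ t in (0:ℝ)..T, ∫ x in (0:ℝ)..1,
    (‖(Γ t).f'' x‖ ^ (p-2) * ⟪(Γ t).f'' x, (η t).f'' x⟫ / (Γ t).len ^ (2*p-1)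
      - ((2*p-1)/p) * ‖(Γ t).f'' x‖ ^ p * ⟪(Γ t).f' x, (η t).f' x⟫ / (Γ t).len ^ (2*p+1)
      + (lam / (Γ t).len) * ⟪(Γ t).f' x, (η t).f' x⟫
      + (Γ t).len * ⟪v t x, (η t).f x⟫)

/-- An admissible test function `η ∈ L^∞(0,T;W^{2,p}(S¹;ℝ²))` (with joint measurability). -/
def TestLinftyW2p (p T : ℝ) (η : ℝ → CurveW2p p) : Prop :=
  (∃ M, ∀ t ∈ Set.Icc (0:ℝ) T, W2pNorm p (η t) ≤ M) ∧
    Measurable (fun q : ℝ × ℝ => (η q.1).f q.2) ∧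
    Measurable (fun q : ℝ × ℝ => (η q.1).f' q.2) ∧
    Measurable (fun q : ℝ × ℝ => (η q.1).f'' q.2)

/-- Weak solution of problem (P) on `S¹ × [0,T]` with initial datum `γ0`
(Definition 1.1): (i) regularity, (ii) the weak form, (iii) `γ(t) ∈ AC` a.e.,
(iv) the initial condition. -/
structure IsWeakSolution (p lam T : ℝ) (γ0 : CurveW2p p)
    (Γ : ℝ → CurveW2p p) (v : ℝ → ℝ → V2) : Prop where
  bound : ∃ M, ∀ t ∈ Set.Icc (0:ℝ) T, W2pNorm p (Γ t) ≤ M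
  measf : Measurable fun q : ℝ × ℝ => (Γ q.1).f q.2
  measf' : Measurable fun q : ℝ × ℝ => (Γ q.1).f' q.2
  measf'' : Measurable fun q : ℝ × ℝ => (Γ q.1).f'' q.2
  measv : Measurable fun q : ℝ × ℝ => v q.1 q.2
  vL2 : IntegrableOn (fun q : ℝ × ℝ => ‖v q.1 q.2‖^2)
      (Set.Ioc (0:ℝ) T ×ˢ Set.Ioc (0:ℝ) 1) volume
  ft : ∀ t ∈ Set.Icc (0:ℝ) T, ∀ x, (Γ t).f x = γ0.f x + ∫ s in (0:ℝ)..t, v s x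
  weak : ∀ η : ℝ → CurveW2p p, TestLinftyW2p p T η → weakForm p lam T Γ v η = 0
  acAE : ∀ᵐ t ∂(volume.restrict (Set.Ioc (0:ℝ) T)), constSpeed (Γ t)
  init : (Γ 0).f = γ0.f

end

noncomputable section
open CurveW2p

/-!
Identify `ℝ²` with `ℂ` and write `γ' = |γ'| e^{iθ}`. The angle `θ` is absolutely continuous with
`θ' = Im (γ'' / γ') = κ |γ'|`, so the total curvature `∫ |κ| ds` dominates the variation of `θ`.
Since `γ'` is periodic, `θ(1) - θ(0) ∈ 2πℤ`. A nonzero winding gives variation `≥ 2π` at once.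
With zero winding `θ` must oscillate by at least `π`, for otherwise `γ'` would stay in an open
half-plane, contradicting `∫₀¹ γ' = 0`; rising by `π` and coming back costs `2π` (Fenchel).
Hölder's inequality with exponents `p` and `p / (p - 1)` then gives
`2π ≤ ∫ |κ| ds ≤ (p E_p(γ))^{1/p} L(γ)^{(p-1)/p}`, which rearranges to the bound.
-/

namespace AbsolutelyContinuousOnInterval

variable {X Y : Type*} [PseudoMetricSpace X] [PseudoMetricSpace Y] {a b : ℝ}

theorem of_dist_le_mul {f : ℝ → X} {g : ℝ → Y} {K : ℝ}
    (hg : AbsolutelyContinuousOnInterval g a b)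
    (h : ∀ x ∈ uIcc a b, ∀ y ∈ uIcc a b, dist (f x) (f y) ≤ K * dist (g x) (g y)) :
    AbsolutelyContinuousOnInterval f a b := by
  unfold AbsolutelyContinuousOnInterval at hg ⊢
  refine squeeze_zero' (Eventually.of_forall fun _ => Finset.sum_nonneg fun _ _ => dist_nonneg)
    ?_ (by simpa using hg.const_mul K)
  rw [eventually_inf_principal]
  filter_upwards with ⟨n, I⟩ hnI
  simp only [disjWithin, mem_ofPred_eq] at hnI
  rw [Finset.mul_sum]
  exact Finset.sum_le_sum fun i hi => h _ (hnI.1 i hi).1 _ (hnI.1 i hi).2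

theorem const_add {E : Type*} [SeminormedAddCommGroup E] {f : ℝ → E}
    (hf : AbsolutelyContinuousOnInterval f a b) (v : E) :
    AbsolutelyContinuousOnInterval (fun x => v + f x) a b :=
  hf.of_dist_le_mul (K := 1) fun x _ y _ => by rw [dist_add_left, one_mul]

end AbsolutelyContinuousOnInterval

theorem LocallyLipschitz.comp_absolutelyContinuousOnInterval {E Y : Type*}
    [SeminormedAddCommGroup E] [PseudoMetricSpace Y] {a b : ℝ} {φ : E → Y}
    (hφ : LocallyLipschitz φ) {f : ℝ → E} (hf : AbsolutelyContinuousOnInterval f a b) :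
    AbsolutelyContinuousOnInterval (φ ∘ f) a b := by
  obtain ⟨K, hK⟩ := (hφ.locallyLipschitzOn (s := f '' uIcc a b)).exists_lipschitzOnWith_of_compact
    (isCompact_uIcc.image_of_continuousOn hf.continuousOn)
  exact hf.of_dist_le_mul fun x hx y hy =>
    hK.dist_le_mul _ (mem_image_of_mem f hx) _ (mem_image_of_mem f hy)

theorem IntervalIntegrable.absolutelyContinuousOnInterval_primitive {E : Type*}
    [NormedAddCommGroup E] [NormedSpace ℝ E] {f : ℝ → E} {a b c : ℝ}
    (h : IntervalIntegrable f volume a b) (hc : c ∈ uIcc a b) :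
    AbsolutelyContinuousOnInterval (fun x => ∫ t in c..x, f t) a b := by
  have hint : ∀ z ∈ uIcc a b, IntervalIntegrable f volume c z :=
    fun z hz => h.mono_set (uIcc_subset_uIcc hc hz)
  refine (h.norm.absolutelyContinuousOnInterval_intervalIntegral hc).of_dist_le_mul (K := 1)
    fun x hx y hy => ?_
  rw [one_mul, dist_eq_norm, Real.dist_eq, integral_interval_sub_left (hint x hx) (hint y hy),
    integral_interval_sub_left (hint x hx).norm (hint y hy).norm]
  exact norm_integral_le_abs_integral_norm

section

open Complex

theorem eq_mul_cexp_integral_div {c g : ℝ → ℂ} {a b : ℝ} (hg : IntervalIntegrable g volume a b)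
    (hw : IntervalIntegrable (fun t => g t / c t) volume a b)
    (hc : ∀ x ∈ uIcc a b, c x ≠ 0) (hrep : ∀ x ∈ uIcc a b, c x = c a + ∫ t in a..x, g t) :
    ∀ x ∈ uIcc a b, c x = c a * cexp (∫ t in a..x, g t / c t) := by
  -- `c · exp (-∫ g / c)` is absolutely continuous with a.e. vanishing derivative
  set h : ℝ → ℂ := fun x => (c a + ∫ t in a..x, g t) * cexp (-∫ t in a..x, g t / c t)
  have hexp : LocallyLipschitz fun z : ℂ => cexp (-z) :=
    ContDiff.locallyLipschitz (𝕂 := ℂ) (by fun_prop)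
  have hAC : AbsolutelyContinuousOnInterval h a b :=
    ((hg.absolutelyContinuousOnInterval_primitive (c := a) left_mem_uIcc).const_add (c a)).fun_smul
      (hexp.comp_absolutelyContinuousOnInterval
        (hw.absolutelyContinuousOnInterval_primitive (c := a) left_mem_uIcc))
  have hderiv : ∀ᵐ x, x ∈ uIcc a b → HasDerivAt h 0 x := by
    filter_upwards [hg.ae_hasDerivAt_integral, hw.ae_hasDerivAt_integral] with x hgx hwx hx
    refine (((hgx hx a left_mem_uIcc).const_add (c a)).mul
      (hwx hx a left_mem_uIcc).neg.cexp).congr_deriv ?_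
    rw [← hrep x hx]
    field_simp [hc x hx]
    ring
  obtain ⟨C, hC⟩ := hAC.const_of_ae_hasDerivAt_zero hderiv
  intro x hx
  have hCx : c x * cexp (-∫ t in a..x, g t / c t) = c a := by
    rw [hrep x hx]
    simpa [h] using (hC x hx).trans (hC a left_mem_uIcc).symm
  rw [← hCx, mul_assoc, ← Complex.exp_add, neg_add_cancel, Complex.exp_zero, mul_one]

theorem exists_int_integral_div_eq {c g : ℝ → ℂ} {a b : ℝ} (hg : IntervalIntegrable g volume a b)
    (hw : IntervalIntegrable (fun t => g t / c t) volume a b)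
    (hc : ∀ x ∈ uIcc a b, c x ≠ 0) (hrep : ∀ x ∈ uIcc a b, c x = c a + ∫ t in a..x, g t)
    (hper : c b = c a) :
    ∃ n : ℤ, ∫ t in a..b, g t / c t = n * (2 * π * I) := by
  refine exp_eq_one_iff.1 (mul_left_cancel₀ (hc a left_mem_uIcc) ?_)
  rw [mul_one, ← eq_mul_cexp_integral_div hg hw hc hrep b right_mem_uIcc, hper]

theorem exists_pi_le_im_sub_of_integral_cexp_eq_zero {W : ℝ → ℂ} {a b : ℝ} (hab : a < b)
    (hW : ContinuousOn W (Icc a b)) (h0 : ∫ x in a..b, cexp (W x) = 0) :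
    ∃ x ∈ Icc a b, ∃ y ∈ Icc a b, π ≤ (W y).im - (W x).im := by
  by_contra! hosc
  have him : ContinuousOn (fun x => (W x).im) (Icc a b) := continuous_im.comp_continuousOn hW
  obtain ⟨xM, hxM, hmax⟩ := isCompact_Icc.exists_isMaxOn (nonempty_Icc.2 hab.le) him
  obtain ⟨xm, hxm, hmin⟩ := isCompact_Icc.exists_isMinOn (nonempty_Icc.2 hab.le) him
  -- `exp ∘ W` takes values in the open half-plane bisected by the direction `φ₀`
  set φ₀ := ((W xM).im + (W xm).im) / 2 with hφ₀
  have hpos : ∀ x ∈ Ioo a b, 0 < (cexp (W x - φ₀ * I)).re := by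
    intro x hx
    have hxM' : (W x).im ≤ (W xM).im := hmax (Ioo_subset_Icc_self hx)
    have hxm' : (W xm).im ≤ (W x).im := hmin (Ioo_subset_Icc_self hx)
    have hosc' := hosc xm hxm xM hxM
    rw [exp_re]
    refine mul_pos (Real.exp_pos _) (Real.cos_pos_of_mem_Ioo ⟨?_, ?_⟩) <;>
      simp only [sub_im, mul_im, ofReal_re, ofReal_im, I_re, I_im, mul_one, mul_zero, add_zero] <;>
      linarith
  have hcont : ContinuousOn (fun x => cexp (W x - φ₀ * I)) (uIcc a b) := by
    rw [uIcc_of_le hab.le]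
    exact continuous_exp.comp_continuousOn (hW.sub continuousOn_const)
  have hzero : ∫ x in a..b, (cexp (W x - φ₀ * I)).re = 0 := by
    have := reCLM.intervalIntegral_comp_comm (hcont.intervalIntegrable (μ := volume))
    simp only [reCLM_apply] at this
    rw [this]
    simp only [sub_eq_add_neg, Complex.exp_add, intervalIntegral.integral_mul_const, h0, zero_mul,
      zero_re]
  exact (intervalIntegral_pos_of_pos_on
    (continuous_re.comp_continuousOn hcont).intervalIntegrable hpos hab).ne' hzero

end

theorem two_mul_abs_integral_le_integral_abs {φ : ℝ → ℝ} {a b x y : ℝ}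
    (hφ : IntervalIntegrable φ volume a b) (h0 : ∫ t in a..b, φ t = 0)
    (hx : x ∈ Icc a b) (hy : y ∈ Icc a b) :
    2 * |∫ t in x..y, φ t| ≤ ∫ t in a..b, |φ t| := by
  wlog hxy : x ≤ y generalizing x y
  · rw [integral_symm, abs_neg]
    exact this hy hx (le_of_not_ge hxy)
  have hab : a ≤ b := hx.1.trans hx.2
  have hI : ∀ {u v}, u ∈ Icc a b → v ∈ Icc a b → IntervalIntegrable φ volume u v :=
    fun hu hv => hφ.mono_set (uIcc_of_le hab ▸ uIcc_subset_Icc hu hv)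
  have ha : a ∈ Icc a b := left_mem_Icc.2 hab
  have hb : b ∈ Icc a b := right_mem_Icc.2 hab
  have hsplit : ∀ ψ : ℝ → ℝ, IntervalIntegrable ψ volume a x → IntervalIntegrable ψ volume x y →
      IntervalIntegrable ψ volume y b →
      ∫ t in a..b, ψ t = (∫ t in a..x, ψ t) + (∫ t in x..y, ψ t) + ∫ t in y..b, ψ t :=
    fun ψ h1 h2 h3 => by
      rw [integral_add_adjacent_intervals h1 h2, integral_add_adjacent_intervals (h1.trans h2) h3]
  have h1 := abs_integral_le_integral_abs (f := φ) (μ := volume) hx.1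
  have h2 := abs_integral_le_integral_abs (f := φ) (μ := volume) hxy
  have h3 := abs_integral_le_integral_abs (f := φ) (μ := volume) hy.2
  have hφ3 := hsplit φ (hI ha hx) (hI hx hy) (hI hy hb)
  rw [hsplit (fun t => |φ t|) (hI ha hx).abs (hI hx hy).abs (hI hy hb).abs]
  have hout := abs_add_le (∫ t in a..x, φ t) (∫ t in y..b, φ t)
  rw [show (∫ t in a..x, φ t) + (∫ t in y..b, φ t) = -∫ t in x..y, φ t by linarith,
    abs_neg] at hout
  linarith

theorem two_pi_le_integral_abs_im_div {c g : ℝ → ℂ} {a b : ℝ} (hab : a < b)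
    (hg : IntervalIntegrable g volume a b) (hc : ∀ x ∈ Icc a b, c x ≠ 0)
    (hrep : ∀ x ∈ Icc a b, c x = c a + ∫ t in a..x, g t) (hper : c b = c a)
    (hmean : ∫ x in a..b, c x = 0) :
    2 * π ≤ ∫ x in a..b, |(g x / c x).im| := by
  have hI : uIcc a b = Icc a b := uIcc_of_le hab.le
  have hcont : ContinuousOn c (Icc a b) := by
    refine ContinuousOn.congr (f := fun x => c a + ∫ t in a..x, g t) ?_ hrep
    exact hI ▸ ((hg.absolutelyContinuousOnInterval_primitive (c := a) left_mem_uIcc).const_add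
      (c a)).continuousOn
  have hw : IntervalIntegrable (fun t => g t / c t) volume a b := by
    simpa only [div_eq_mul_inv] using hg.mul_continuousOn (hI ▸ hcont.inv₀ hc)
  have hwI : ∀ x ∈ Icc a b, IntervalIntegrable (fun t => g t / c t) volume a x :=
    fun x hx => hw.mono_set (by rw [hI, uIcc_of_le hx.1]; exact Icc_subset_Icc_right hx.2)
  obtain ⟨n, hn⟩ := exists_int_integral_div_eq hg hw (hI ▸ hc) (hI ▸ hrep) hper
  set W : ℝ → ℂ := fun x => ∫ t in a..x, g t / c t
  set θ : ℝ → ℝ := fun x => ∫ t in a..x, (g t / c t).im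
  have hθ : ∀ x ∈ Icc a b, (W x).im = θ x := fun x hx => by
    simpa using (Complex.imCLM.intervalIntegral_comp_comm (hwI x hx)).symm
  have hθb : θ b = n * (2 * π) := by
    rw [← hθ b (right_mem_Icc.2 hab.le), show W b = _ from hn]
    simp
  rcases eq_or_ne n 0 with rfl | hn0
  · have hW0 : ∫ x in a..b, Complex.exp (W x) = 0 := by
      have hlog := eq_mul_cexp_integral_div hg hw (hI ▸ hc) (hI ▸ hrep)
      rw [integral_congr fun x hx => hlog x hx, intervalIntegral.integral_const_mul] at hmean
      exact (mul_eq_zero.1 hmean).resolve_left (hc a (left_mem_Icc.2 hab.le))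
    obtain ⟨x, hx, y, hy, hxy⟩ := exists_pi_le_im_sub_of_integral_cexp_eq_zero hab
      (hI ▸ (hw.absolutelyContinuousOnInterval_primitive (c := a) left_mem_uIcc).continuousOn) hW0
    rw [hθ x hx, hθ y hy, show θ y - θ x = ∫ t in x..y, (g t / c t).im from
      integral_interval_sub_left ⟨(hwI y hy).1.im, (hwI y hy).2.im⟩
        ⟨(hwI x hx).1.im, (hwI x hx).2.im⟩] at hxy
    have := two_mul_abs_integral_le_integral_abs (φ := fun t => (g t / c t).im)
      ⟨hw.1.im, hw.2.im⟩ (by simpa using hθb) hx hy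
    linarith [le_abs_self (∫ t in x..y, (g t / c t).im)]
  · calc 2 * π ≤ |θ b| := by
          rw [hθb, abs_mul, abs_of_pos (by positivity : 0 < 2 * π)]
          exact le_mul_of_one_le_left (by positivity) (by exact_mod_cast Int.one_le_abs hn0)
      _ ≤ ∫ x in a..b, |(g x / c x).im| := abs_integral_le_integral_abs hab.le

theorem memLp_ofReal_of_integrable_rpow {α : Type*} [MeasurableSpace α] {μ : Measure α}
    {p : ℝ} (hp : 0 < p) {f : α → ℝ} (hf0 : ∀ x, 0 ≤ f x) (hfm : AEStronglyMeasurable f μ)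
    (hfp : Integrable (fun x => f x ^ p) μ) : MemLp f (ENNReal.ofReal p) μ := by
  refine (integrable_norm_rpow_iff hfm (by simpa using hp) ENNReal.ofReal_ne_top).1 ?_
  simpa only [ENNReal.toReal_ofReal hp.le, Real.norm_of_nonneg (hf0 _)] using hfp

theorem integral_le_rpow_integral_mul_rpow_integral {α : Type*} [MeasurableSpace α]
    {μ : Measure α} {p : ℝ} (hp : 1 < p) {u w : α → ℝ} (hu : ∀ x, 0 ≤ u x) (hw : ∀ x, 0 < w x)
    (hum : AEStronglyMeasurable u μ) (hwm : AEStronglyMeasurable w μ)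
    (hup : Integrable (fun x => u x ^ p / w x ^ (p - 1)) μ) (hwi : Integrable w μ) :
    ∫ x, u x ∂μ ≤ (∫ x, u x ^ p / w x ^ (p - 1) ∂μ) ^ (1 / p) * (∫ x, w x ∂μ) ^ ((p - 1) / p) := by
  have hp0 : 0 < p := by linarith
  have hpq := Real.HolderConjugate.conjExponent hp
  have hq : p.conjExponent = p / (p - 1) := rfl
  set A : α → ℝ := fun x => u x / w x ^ ((p - 1) / p)
  set B : α → ℝ := fun x => w x ^ ((p - 1) / p)
  have hA0 : ∀ x, 0 ≤ A x := fun x => div_nonneg (hu x) (rpow_nonneg (hw x).le _)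
  have hB0 : ∀ x, 0 ≤ B x := fun x => rpow_nonneg (hw x).le _
  have hAB : ∀ x, A x * B x = u x := fun x => div_mul_cancel₀ _ (rpow_pos_of_pos (hw x) _).ne'
  have hAp : ∀ x, A x ^ p = u x ^ p / w x ^ (p - 1) := fun x => by
    rw [div_rpow (hu x) (rpow_nonneg (hw x).le _), ← rpow_mul (hw x).le,
      div_mul_cancel₀ _ hp0.ne']
  have hBq : ∀ x, B x ^ p.conjExponent = w x := fun x => by
    rw [← rpow_mul (hw x).le, hq, div_mul_div_comm, mul_comm, div_self (by positivity), rpow_one]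
  have hBm : AEStronglyMeasurable B μ := (hwm.aemeasurable.pow_const _).aestronglyMeasurable
  have hAm : AEStronglyMeasurable A μ :=
    (hum.aemeasurable.div hBm.aemeasurable).aestronglyMeasurable
  have hholder := integral_mul_le_Lp_mul_Lq_of_nonneg hpq (Eventually.of_forall hA0)
    (Eventually.of_forall hB0)
    (memLp_ofReal_of_integrable_rpow hp0 hA0 hAm (by simpa only [hAp] using hup))
    (memLp_ofReal_of_integrable_rpow hpq.symm.pos hB0 hBm (by simpa only [hBq] using hwi))
  simp only [hAB, hAp, hBq] at hholder
  rwa [hq, one_div_div] at hholder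

theorem rpow_div_rpow_le_of_le_rpow_mul_rpow {p a E L : ℝ} (hp : 1 < p) (ha : 0 < a)
    (hE : 0 ≤ E) (hL : 0 ≤ L) (h : a ≤ E ^ (1 / p) * L ^ ((p - 1) / p)) :
    (a ^ p / E) ^ (1 / (p - 1)) ≤ L := by
  have hp0 : 0 < p := by linarith
  have hp1 : 0 < p - 1 := by linarith
  have hEpos : 0 < E := by
    rcases hE.eq_or_lt with rfl | hE
    · rw [zero_rpow (by positivity), zero_mul] at h
      linarith
    · exact hE
  have hpow : a ^ p ≤ E * L ^ (p - 1) := by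
    calc a ^ p ≤ (E ^ (1 / p) * L ^ ((p - 1) / p)) ^ p := by gcongr
      _ = E * L ^ (p - 1) := by
        rw [mul_rpow (by positivity) (by positivity), ← rpow_mul hE, ← rpow_mul hL,
          one_div_mul_cancel hp0.ne', div_mul_cancel₀ _ hp0.ne', rpow_one]
  calc (a ^ p / E) ^ (1 / (p - 1)) ≤ (L ^ (p - 1)) ^ (1 / (p - 1)) := by
        gcongr
        rwa [div_le_iff₀' hEpos]
    _ = L := by rw [← rpow_mul hL, mul_one_div_cancel hp1.ne', rpow_one]

namespace V2

def toComplex : V2 ≃ₗᵢ[ℝ] ℂ := Complex.orthonormalBasisOneI.repr.symm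

theorem toComplex_apply (v : V2) : toComplex v = v 0 + v 1 * Complex.I :=
  Complex.orthonormalBasisOneI_repr_symm_apply v

theorem im_toComplex_div (a b : V2) :
    (toComplex a / toComplex b).im = ⟪a, Rot b⟫ / ‖b‖ ^ 2 := by
  rw [Complex.div_im, Complex.normSq_eq_norm_sq, LinearIsometryEquiv.norm_map]
  simp [toComplex_apply, Rot, PiLp.inner_apply, Fin.sum_univ_two]
  ring

end V2

namespace CurveW2p

variable {p : ℝ} (γ : CurveW2p p)

-- `|κ| |γ'| = |⟪γ'', R γ'⟫| / |γ'|²`, read in `ℂ` as `|Im (γ'' / γ')|`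
def totalCurvatureDensity (x : ℝ) : ℝ :=
  |(V2.toComplex (γ.f'' x) / V2.toComplex (γ.f' x)).im|

theorem totalCurvatureDensity_nonneg (x : ℝ) : 0 ≤ γ.totalCurvatureDensity x := abs_nonneg _

theorem totalCurvatureDensity_le_norm_div (x : ℝ) :
    γ.totalCurvatureDensity x ≤ ‖γ.f'' x‖ / ‖γ.f' x‖ := by
  refine (Complex.abs_im_le_norm _).trans_eq ?_
  rw [norm_div, LinearIsometryEquiv.norm_map, LinearIsometryEquiv.norm_map]

theorem totalCurvatureDensity_rpow_div (hreg : ∀ x, γ.f' x ≠ 0) (x : ℝ) :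
    γ.totalCurvatureDensity x ^ p / ‖γ.f' x‖ ^ (p - 1)
      = |⟪γ.f'' x, Rot (γ.f' x)⟫| ^ p / ‖γ.f' x‖ ^ (3 * p - 1) := by
  have hs : 0 < ‖γ.f' x‖ := norm_pos_iff.2 (hreg x)
  rw [totalCurvatureDensity, V2.im_toComplex_div, abs_div,
    abs_of_pos (a := ‖γ.f' x‖ ^ 2) (by positivity), div_rpow (abs_nonneg _) (by positivity),
    div_div, ← rpow_natCast, ← rpow_mul hs.le, ← rpow_add hs]
  ring_nf

theorem integral_totalCurvatureDensity_rpow_div (hp : p ≠ 0) (hreg : ∀ x, γ.f' x ≠ 0) :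
    ∫ x in Ioc 0 1, γ.totalCurvatureDensity x ^ p / ‖γ.f' x‖ ^ (p - 1) = p * Ep p γ := by
  rw [Ep, ← mul_assoc, mul_one_div_cancel hp, one_mul, integral_of_le (zero_le_one' ℝ)]
  simp only [γ.totalCurvatureDensity_rpow_div hreg]

theorem Ep_nonneg (hp : 0 ≤ p) : 0 ≤ Ep p γ :=
  mul_nonneg (by positivity) (integral_nonneg (zero_le_one' ℝ) fun _ _ => by positivity)

theorem len_nonneg : 0 ≤ γ.len := integral_nonneg (zero_le_one' ℝ) fun _ _ => norm_nonneg _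

theorem len_eq_setIntegral : γ.len = ∫ x in Ioc 0 1, ‖γ.f' x‖ :=
  integral_of_le (zero_le_one' ℝ)

theorem intervalIntegrable_f'' (hp : 1 ≤ p) : IntervalIntegrable γ.f'' volume 0 1 :=
  (intervalIntegrable_iff_integrableOn_Ioc_of_le (zero_le_one' ℝ)).2
    (γ.memLp.integrable (ENNReal.one_le_ofReal.2 hp))

theorem integrableOn_norm_f''_rpow (hp : 0 < p) :
    IntegrableOn (fun x => ‖γ.f'' x‖ ^ p) (Ioc 0 1) := by
  have := (integrable_norm_rpow_iff γ.memLp.1 (by simpa using hp) ENNReal.ofReal_ne_top).2 γ.memLp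
  rwa [ENNReal.toReal_ofReal hp.le] at this

theorem continuousOn_f' (hp : 1 ≤ p) : ContinuousOn γ.f' (Icc 0 1) := by
  rw [← uIcc_of_le (zero_le_one' ℝ), funext γ.hf'']
  exact (((γ.intervalIntegrable_f'' hp).absolutelyContinuousOnInterval_primitive (c := 0)
    left_mem_uIcc).const_add _).continuousOn

theorem measurable_f' : Measurable γ.f' := by
  rw [← deriv_eq γ.hf']
  exact measurable_deriv _

theorem integrableOn_norm_f' (hp : 1 ≤ p) : IntegrableOn (fun x => ‖γ.f' x‖) (Ioc 0 1) :=
  ((γ.continuousOn_f' hp).norm.integrableOn_compact isCompact_Icc).mono_set Ioc_subset_Icc_self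

theorem integral_f'_eq_zero (hp : 1 ≤ p) : ∫ x in (0:ℝ)..1, γ.f' x = 0 := by
  rw [integral_eq_sub_of_hasDerivAt (fun x _ => γ.hf' x)
    ((uIcc_of_le (zero_le_one' ℝ) ▸ γ.continuousOn_f' hp).intervalIntegrable), ← zero_add 1,
    γ.per 0, sub_self]

theorem aestronglyMeasurable_totalCurvatureDensity :
    AEStronglyMeasurable γ.totalCurvatureDensity (volume.restrict (Ioc 0 1)) :=
  (((V2.toComplex.continuous.comp_aestronglyMeasurable γ.memLp.1).aemeasurable.div
    (V2.toComplex.continuous.measurable.comp γ.measurable_f').aemeasurable).im.abs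
    ).aestronglyMeasurable

theorem integrableOn_totalCurvatureDensity_rpow_div (hp : 1 ≤ p) (hreg : ∀ x, γ.f' x ≠ 0) :
    IntegrableOn (fun x => γ.totalCurvatureDensity x ^ p / ‖γ.f' x‖ ^ (p - 1)) (Ioc 0 1) := by
  obtain ⟨x₀, -, hmin⟩ := isCompact_Icc.exists_isMinOn (nonempty_Icc.2 (zero_le_one' ℝ))
    (γ.continuousOn_f' hp).norm
  set r := ‖γ.f' x₀‖
  have hr : 0 < r := norm_pos_iff.2 (hreg x₀)
  refine ((γ.integrableOn_norm_f''_rpow (by linarith)).const_mul (r ^ p * r ^ (p - 1))⁻¹).mono'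
    (((γ.aestronglyMeasurable_totalCurvatureDensity.aemeasurable.pow_const _).div
      (γ.measurable_f'.norm.pow_const _).aemeasurable).aestronglyMeasurable) ?_
  refine (ae_restrict_iff' measurableSet_Ioc).2 (Eventually.of_forall fun x hx => ?_)
  have hs : r ≤ ‖γ.f' x‖ := hmin (Ioc_subset_Icc_self hx)
  have hκ : γ.totalCurvatureDensity x ≤ ‖γ.f'' x‖ / r :=
    (γ.totalCurvatureDensity_le_norm_div x).trans (by gcongr)
  have hκ0 := γ.totalCurvatureDensity_nonneg x
  rw [Real.norm_of_nonneg (by positivity)]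
  calc γ.totalCurvatureDensity x ^ p / ‖γ.f' x‖ ^ (p - 1)
      ≤ (‖γ.f'' x‖ / r) ^ p / r ^ (p - 1) := by gcongr
    _ = (r ^ p * r ^ (p - 1))⁻¹ * ‖γ.f'' x‖ ^ p := by
        rw [div_rpow (norm_nonneg _) hr.le]
        field_simp

theorem two_pi_le_integral_totalCurvatureDensity (hp : 1 ≤ p) (hreg : ∀ x, γ.f' x ≠ 0) :
    2 * π ≤ ∫ x in (0:ℝ)..1, γ.totalCurvatureDensity x := by
  have hT : ∀ (a b : ℝ) (f : ℝ → V2),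
      ∫ x in a..b, V2.toComplex (f x) = V2.toComplex (∫ x in a..b, f x) :=
    fun _ _ => V2.toComplex.toLinearIsometry.intervalIntegral_comp_comm
  have hg : IntervalIntegrable (fun x => V2.toComplex (γ.f'' x)) volume 0 1 :=
    ⟨(V2.toComplex : V2 →L[ℝ] ℂ).integrable_comp (γ.intervalIntegrable_f'' hp).1,
      (V2.toComplex : V2 →L[ℝ] ℂ).integrable_comp (γ.intervalIntegrable_f'' hp).2⟩
  refine two_pi_le_integral_abs_im_div zero_lt_one hg (fun x _ => by simpa using hreg x)
    (fun x _ => ?_) ?_ ?_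
  · rw [γ.hf'' x, map_add, hT]
  · rw [← zero_add 1, γ.per' 0]
  · rw [hT, γ.integral_f'_eq_zero hp, map_zero]

end CurveW2p

/-- **Lemma 2.2.** For `p ≥ 2` and a closed curve `γ ∈ W^{2,p}(S¹;ℝ²)`,
`L(γ) ≥ ((2π)^p / (p E_p(γ)))^{1/(p−1)}`. -/
theorem length_lower_bound_via_energy (p : ℝ) (hp : 2 ≤ p)
    (γ : CurveW2p p) (hreg : ∀ x, γ.f' x ≠ 0) :
    γ.len ≥ ((2 * π) ^ p / (p * Ep p γ)) ^ (1 / (p - 1)) := by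
  have hp1 : 1 < p := by linarith
  have hholder := integral_le_rpow_integral_mul_rpow_integral hp1 γ.totalCurvatureDensity_nonneg
    (fun x => norm_pos_iff.2 (hreg x)) γ.aestronglyMeasurable_totalCurvatureDensity
    γ.measurable_f'.norm.aestronglyMeasurable
    (γ.integrableOn_totalCurvatureDensity_rpow_div hp1.le hreg) (γ.integrableOn_norm_f' hp1.le)
  rw [γ.integral_totalCurvatureDensity_rpow_div (by positivity) hreg, ← γ.len_eq_setIntegral,
    ← integral_of_le (zero_le_one' ℝ)] at hholder
  exact rpow_div_rpow_le_of_le_rpow_mul_rpow hp1 (by positivity)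
    (mul_nonneg (by positivity) (γ.Ep_nonneg (by positivity))) γ.len_nonneg
    ((γ.two_pi_le_integral_totalCurvatureDensity hp1.le hreg).trans hholder)

end
end

section
/- For ψ ∈ C^∞(S¹;ℝ²) define β = −(1/2)∫₀¹ ψ(s) ds, α = −β − ∫₀¹∫₀^ξ ψ(s) ds dξ, φ₁(x) = ∫₀ˣ∫₀^ξ ψ(s) ds dξ + xα + x²β, and φ₂(x) = ∫₀ˣ ψ(ξ) dξ + 2xβ. Then φ₁, φ₂ ∈ W^{2,p}(S¹;ℝ²) (i.e. they extend periodically), and the estimates max{‖φ₁‖_{C¹(S¹)}, ‖φ₂‖_{L^∞(S¹)}, |α|, |β|} ≤ (7/2)‖ψ‖_{L¹(S¹)} and ‖φ₂′‖_{L^r(S¹)} ≤ 2‖ψ‖_{L^r(S¹)} for every r ≥ 1 hold. -/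
open MeasureTheory Filter Real Set intervalIntegral RealInnerProductSpace

noncomputable section
open CurveW2p

/-- `β = −(1/2)∫₀¹ ψ`. -/
def ψβ (ψ : ℝ → V2) : V2 := (-(1:ℝ)/2) • ∫ s in (0:ℝ)..1, ψ s

/-- `α = −β − ∫₀¹∫₀^ξ ψ`. -/
def ψα (ψ : ℝ → V2) : V2 := -(ψβ ψ) - ∫ ξ in (0:ℝ)..1, ∫ s in (0:ℝ)..ξ, ψ s

/-- `φ₁(x) = ∫₀ˣ∫₀^ξ ψ + xα + x²β`. -/
def ψφ₁ (ψ : ℝ → V2) (x : ℝ) : V2 :=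
  (∫ ξ in (0:ℝ)..x, ∫ s in (0:ℝ)..ξ, ψ s) + x • ψα ψ + (x^2) • ψβ ψ

/-- `φ₂(x) = ∫₀ˣ ψ + 2xβ`. -/
def ψφ₂ (ψ : ℝ → V2) (x : ℝ) : V2 := (∫ ξ in (0:ℝ)..x, ψ ξ) + (2*x) • ψβ ψ

open scoped ContDiff NNReal ENNReal

section AuxAnalytic

variable {E : Type*} [NormedAddCommGroup E] [NormedSpace ℝ E] [CompleteSpace E]

/-- The primitive of a `C^∞` (analytic) function is `C^∞` (analytic). -/
lemma contDiff_top_of_hasDerivAt {F g : ℝ → E} (hF : ∀ x, HasDerivAt F (g x) x)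
    (hg : ContDiff ℝ (⊤ : ℕ∞) g) : ContDiff ℝ (⊤ : ℕ∞) F := by
  have hd : deriv F = g := funext fun x => (hF x).deriv
  rw [contDiff_infty_iff_deriv]
  exact ⟨fun x => (hF x).differentiableAt, by rwa [hd]⟩

end AuxAnalytic

lemma periodic_norm_bound {E : Type*} [NormedAddCommGroup E] {f : ℝ → E}
    (hf : Function.Periodic f 1) {C : ℝ}
    (h : ∀ x ∈ Set.Icc (0:ℝ) 1, ‖f x‖ ≤ C) (x : ℝ) : ‖f x‖ ≤ C := by
  have h1 : f (Int.fract x) = f x := by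
    rw [Int.fract]
    simpa only [mul_one] using hf.sub_int_mul_eq ⌊x⌋
  rw [← h1]
  exact h _ ⟨Int.fract_nonneg x, (Int.fract_lt_one x).le⟩


/-- Primitive of `ψ`. -/
def ψF (ψ : ℝ → V2) (x : ℝ) : V2 := ∫ s in (0:ℝ)..x, ψ s

/-- Second primitive of `ψ`. -/
def ψG (ψ : ℝ → V2) (x : ℝ) : V2 := ∫ ξ in (0:ℝ)..x, ψF ψ ξ

lemma ψβ_eq (ψ : ℝ → V2) : ψβ ψ = (-(1:ℝ)/2) • ψF ψ 1 := rfl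

lemma ψα_eq (ψ : ℝ → V2) : ψα ψ = -ψβ ψ - ψG ψ 1 := rfl

lemma ψφ₁_eq (ψ : ℝ → V2) (x : ℝ) : ψφ₁ ψ x = ψG ψ x + x • ψα ψ + (x^2) • ψβ ψ := rfl

lemma ψφ₂_eq (ψ : ℝ → V2) (x : ℝ) : ψφ₂ ψ x = ψF ψ x + (2*x) • ψβ ψ := rfl

lemma ψF_hasDeriv {ψ : ℝ → V2} (hc : Continuous ψ) (x : ℝ) :
    HasDerivAt (ψF ψ) (ψ x) x :=
  intervalIntegral.integral_hasDerivAt_right (hc.intervalIntegrable _ _)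
    (hc.stronglyMeasurableAtFilter _ _) hc.continuousAt

lemma ψF_cont {ψ : ℝ → V2} (hc : Continuous ψ) : Continuous (ψF ψ) :=
  continuous_iff_continuousAt.2 fun x => (ψF_hasDeriv hc x).continuousAt

lemma ψG_hasDeriv {ψ : ℝ → V2} (hc : Continuous ψ) (x : ℝ) :
    HasDerivAt (ψG ψ) (ψF ψ x) x :=
  intervalIntegral.integral_hasDerivAt_right ((ψF_cont hc).intervalIntegrable _ _)
    ((ψF_cont hc).stronglyMeasurableAtFilter _ _) (ψF_cont hc).continuousAt

lemma ψF_add_one {ψ : ℝ → V2} (hc : Continuous ψ) (hper : Function.Periodic ψ 1) (x : ℝ) :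
    ψF ψ (x + 1) = ψF ψ x + ψF ψ 1 := by
  have h1 : ψF ψ x + (∫ s in x..(x+1), ψ s) = ψF ψ (x+1) :=
    intervalIntegral.integral_add_adjacent_intervals (hc.intervalIntegrable 0 x)
      (hc.intervalIntegrable x (x+1))
  have h2 : (∫ s in x..(x+1), ψ s) = ψF ψ 1 := by
    have := hper.intervalIntegral_add_eq x 0
    simpa [ψF] using this
  rw [← h1, h2]

lemma ψF_bound {ψ : ℝ → V2} (hc : Continuous ψ) {x : ℝ} (hx : x ∈ Set.Icc (0:ℝ) 1) :
    ‖ψF ψ x‖ ≤ ∫ s in (0:ℝ)..1, ‖ψ s‖ := by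
  calc ‖ψF ψ x‖ ≤ ∫ s in (0:ℝ)..x, ‖ψ s‖ :=
        intervalIntegral.norm_integral_le_integral_norm hx.1
    _ ≤ ∫ s in (0:ℝ)..1, ‖ψ s‖ := by
        rw [← intervalIntegral.integral_add_adjacent_intervals
          (hc.norm.intervalIntegrable 0 x) (hc.norm.intervalIntegrable x 1)]
        have h0 : 0 ≤ ∫ s in x..1, ‖ψ s‖ :=
          intervalIntegral.integral_nonneg hx.2 (fun s _ => norm_nonneg _)
        linarith

lemma ψG_bound {ψ : ℝ → V2} (hc : Continuous ψ) {x : ℝ} (hx : x ∈ Set.Icc (0:ℝ) 1) :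
    ‖ψG ψ x‖ ≤ ∫ s in (0:ℝ)..1, ‖ψ s‖ := by
  have h1 : ‖ψG ψ x‖ ≤ (∫ s in (0:ℝ)..1, ‖ψ s‖) * |x - 0| := by
    apply intervalIntegral.norm_integral_le_of_norm_le_const
    intro s hs
    rw [Set.uIoc_of_le hx.1] at hs
    exact ψF_bound hc ⟨hs.1.le, hs.2.trans hx.2⟩
  have hI0 : 0 ≤ ∫ s in (0:ℝ)..1, ‖ψ s‖ :=
    intervalIntegral.integral_nonneg zero_le_one (fun s _ => norm_nonneg _)
  have h2 : |x - 0| ≤ 1 := by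
    rw [sub_zero, abs_of_nonneg hx.1]; exact hx.2
  calc ‖ψG ψ x‖ ≤ (∫ s in (0:ℝ)..1, ‖ψ s‖) * |x - 0| := h1
    _ ≤ (∫ s in (0:ℝ)..1, ‖ψ s‖) * 1 := by
        exact mul_le_mul_of_nonneg_left h2 hI0
    _ = ∫ s in (0:ℝ)..1, ‖ψ s‖ := mul_one _

/-- **Lemma 3.7.** The primitives `φ₁, φ₂` of a smooth periodic `ψ` are periodic
(equivalently, lie in `W^{2,p}(S¹)`), with the stated `C¹`, `L^∞` and `L^r` bounds. -/
theorem test_function_primitives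
    (p r : ℝ) (hp : 1 < p) (hr : 1 ≤ r)
    (ψ : ℝ → V2) (hψ : ContDiff ℝ (⊤ : ℕ∞) ψ) (hper : Function.Periodic ψ 1) :
    (Function.Periodic (ψφ₁ ψ) 1 ∧ Function.Periodic (ψφ₂ ψ) 1 ∧
      ContDiff ℝ (⊤ : ℕ∞) (ψφ₁ ψ) ∧ ContDiff ℝ (⊤ : ℕ∞) (ψφ₂ ψ)) ∧
    (∀ x, ‖ψφ₁ ψ x‖ ≤ (7/2) * ∫ s in (0:ℝ)..1, ‖ψ s‖) ∧
    (∀ x, ‖deriv (ψφ₁ ψ) x‖ ≤ (7/2) * ∫ s in (0:ℝ)..1, ‖ψ s‖) ∧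
    (∀ x, ‖ψφ₂ ψ x‖ ≤ (7/2) * ∫ s in (0:ℝ)..1, ‖ψ s‖) ∧
    ‖ψα ψ‖ ≤ (7/2) * ∫ s in (0:ℝ)..1, ‖ψ s‖ ∧
    ‖ψβ ψ‖ ≤ (7/2) * ∫ s in (0:ℝ)..1, ‖ψ s‖ ∧
    (∫ x in (0:ℝ)..1, ‖deriv (ψφ₂ ψ) x‖ ^ r) ^ (1/r)
      ≤ 2 * (∫ x in (0:ℝ)..1, ‖ψ x‖ ^ r) ^ (1/r) := by
  have cψ : Continuous ψ := hψ.continuous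
  set I : ℝ := ∫ s in (0:ℝ)..1, ‖ψ s‖ with hIdef
  have hI0 : 0 ≤ I :=
    intervalIntegral.integral_nonneg zero_le_one (fun s _ => norm_nonneg _)
  -- basic norm bounds
  have hβle : ‖ψβ ψ‖ ≤ I / 2 := by
    rw [ψβ_eq, norm_smul]
    have h1 : ‖ψF ψ 1‖ ≤ I := ψF_bound cψ ⟨zero_le_one, le_refl 1⟩
    have h2 : ‖(-(1:ℝ)/2)‖ = 1/2 := by norm_num [Real.norm_eq_abs]
    rw [h2]; linarith
  have hαle : ‖ψα ψ‖ ≤ (3/2) * I := by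
    rw [ψα_eq]
    have h1 : ‖-ψβ ψ - ψG ψ 1‖ ≤ ‖ψβ ψ‖ + ‖ψG ψ 1‖ := by
      calc ‖-ψβ ψ - ψG ψ 1‖ ≤ ‖-ψβ ψ‖ + ‖ψG ψ 1‖ := norm_sub_le _ _
        _ = ‖ψβ ψ‖ + ‖ψG ψ 1‖ := by rw [norm_neg]
    have h2 : ‖ψG ψ 1‖ ≤ I := ψG_bound cψ ⟨zero_le_one, le_refl 1⟩
    linarith
  have h2β : (2:ℝ) • ψβ ψ = -ψF ψ 1 := by
    rw [ψβ_eq, smul_smul]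
    norm_num
  have h2βle : ‖(2:ℝ) • ψβ ψ‖ ≤ I := by
    rw [h2β, norm_neg]
    exact ψF_bound cψ ⟨zero_le_one, le_refl 1⟩
  -- derivatives
  have hD2 : ∀ x, HasDerivAt (ψφ₂ ψ) (ψ x + (2:ℝ) • ψβ ψ) x := by
    intro x
    have h1 : HasDerivAt (fun y => ψF ψ y + (2*y) • ψβ ψ) (ψ x + ((2:ℝ)*1) • ψβ ψ) x :=
      (ψF_hasDeriv cψ x).add
      (((hasDerivAt_id x).const_mul (2:ℝ)).smul_const (ψβ ψ))
    rw [show ψφ₂ ψ = fun y => ψF ψ y + (2*y) • ψβ ψ from rfl]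
    rw [mul_one] at h1; exact h1
  have hD1 : ∀ x, HasDerivAt (ψφ₁ ψ) (ψφ₂ ψ x + ψα ψ) x := by
    intro x
    have h1 : HasDerivAt (fun y : ℝ => ψG ψ y + y • ψα ψ + (y^2) • ψβ ψ)
        (ψF ψ x + (1:ℝ) • ψα ψ + ((2:ℕ) * x ^ (2-1) : ℝ) • ψβ ψ) x :=
      ((ψG_hasDeriv cψ x).add ((hasDerivAt_id x).smul_const (ψα ψ))).add
        ((hasDerivAt_pow 2 x).smul_const (ψβ ψ))
    rw [show ψφ₁ ψ = fun y : ℝ => ψG ψ y + y • ψα ψ + (y^2) • ψβ ψ from rfl]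
    convert h1 using 1
    rw [ψφ₂_eq]
    push_cast
    simp only [one_smul, pow_one]
    abel
  -- periodicity of φ₂
  have hper2 : Function.Periodic (ψφ₂ ψ) 1 := by
    intro x
    rw [ψφ₂_eq, ψφ₂_eq, ψF_add_one cψ hper x,
      show (2*(x+1) : ℝ) = 2*x + 2 by ring, add_smul,
      show ((2:ℝ)) • ψβ ψ = -ψF ψ 1 from h2β]
    abel
  -- periodicity of deriv φ₁
  have hperD1 : Function.Periodic (fun x => ψφ₂ ψ x + ψα ψ) 1 := by
    intro x
    simp only [hper2 x]
  -- periodicity of φ₁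
  have hper1 : Function.Periodic (ψφ₁ ψ) 1 := by
    have hdiff : ∀ x : ℝ, HasDerivAt (fun y => ψφ₁ ψ (y+1) - ψφ₁ ψ y) 0 x := by
      intro x
      have h1 : HasDerivAt (fun y : ℝ => ψφ₁ ψ (y+1)) (ψφ₂ ψ (x+1) + ψα ψ) x := by
        have := (hD1 (x+1)).scomp x ((hasDerivAt_id x).add_const 1)
        rw [one_smul] at this; exact this
      have h2 := h1.sub (hD1 x)
      have h3 : ψφ₂ ψ (x+1) + ψα ψ - (ψφ₂ ψ x + ψα ψ) = 0 := by
        rw [hper2 x]; abel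
      rwa [h3] at h2
    have hconst := is_const_of_deriv_eq_zero (𝕜 := ℝ)
      (fun x => (hdiff x).differentiableAt) (fun x => (hdiff x).deriv)
    intro x
    have h0 : ψφ₁ ψ (0+1) - ψφ₁ ψ 0 = 0 := by
      have hφ10 : ψφ₁ ψ 0 = 0 := by
        rw [ψφ₁_eq]
        simp [ψG, intervalIntegral.integral_same]
      have hφ11 : ψφ₁ ψ 1 = ψG ψ 1 + ψα ψ + ψβ ψ := by
        rw [ψφ₁_eq]; norm_num
      rw [zero_add, hφ11, hφ10, ψα_eq]
      abel
    have hx0 := hconst x 0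
    rw [h0] at hx0
    exact sub_eq_zero.1 hx0
  -- smoothness
  have smooth2 : ContDiff ℝ (⊤ : ℕ∞) (ψφ₂ ψ) := by
    have hF : ContDiff ℝ (⊤ : ℕ∞) (ψF ψ) := contDiff_top_of_hasDerivAt (ψF_hasDeriv cψ) hψ
    rw [show ψφ₂ ψ = fun y => ψF ψ y + (2*y) • ψβ ψ from rfl]
    exact hF.add ((contDiff_const.mul contDiff_id).smul contDiff_const)
  have smooth1 : ContDiff ℝ (⊤ : ℕ∞) (ψφ₁ ψ) := by
    have hF : ContDiff ℝ (⊤ : ℕ∞) (ψF ψ) := contDiff_top_of_hasDerivAt (ψF_hasDeriv cψ) hψ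
    have hG : ContDiff ℝ (⊤ : ℕ∞) (ψG ψ) := contDiff_top_of_hasDerivAt (ψG_hasDeriv cψ) hF
    rw [show ψφ₁ ψ = fun y : ℝ => ψG ψ y + y • ψα ψ + (y^2) • ψβ ψ from rfl]
    exact (hG.add (contDiff_id.smul contDiff_const)).add
      ((contDiff_id.pow 2).smul contDiff_const)
  -- bounds on [0,1]
  have hb2 : ∀ x ∈ Set.Icc (0:ℝ) 1, ‖ψφ₂ ψ x‖ ≤ 2 * I := by
    intro x hx
    rw [ψφ₂_eq]
    have h1 : ‖ψF ψ x‖ ≤ I := ψF_bound cψ hx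
    have h2 : ‖(2*x) • ψβ ψ‖ ≤ I := by
      rw [norm_smul, Real.norm_eq_abs, abs_of_nonneg (by linarith [hx.1] : (0:ℝ) ≤ 2*x)]
      calc 2*x * ‖ψβ ψ‖ ≤ 2 * ‖ψβ ψ‖ := by
            apply mul_le_mul_of_nonneg_right _ (norm_nonneg _)
            linarith [hx.2]
        _ ≤ I := by linarith [hβle]
    calc ‖ψF ψ x + (2*x) • ψβ ψ‖ ≤ ‖ψF ψ x‖ + ‖(2*x) • ψβ ψ‖ := norm_add_le _ _
      _ ≤ 2 * I := by linarith
  have hb1 : ∀ x ∈ Set.Icc (0:ℝ) 1, ‖ψφ₁ ψ x‖ ≤ (7/2) * I := by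
    intro x hx
    rw [ψφ₁_eq]
    have hxabs : |x| ≤ 1 := by rw [abs_of_nonneg hx.1]; exact hx.2
    have h1 : ‖ψG ψ x‖ ≤ I := ψG_bound cψ hx
    have h2 : ‖x • ψα ψ‖ ≤ (3/2) * I := by
      rw [norm_smul, Real.norm_eq_abs]
      calc |x| * ‖ψα ψ‖ ≤ 1 * ‖ψα ψ‖ :=
            mul_le_mul_of_nonneg_right hxabs (norm_nonneg _)
        _ = ‖ψα ψ‖ := one_mul _
        _ ≤ (3/2) * I := hαle
    have h3 : ‖(x^2) • ψβ ψ‖ ≤ I / 2 := by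
      rw [norm_smul, Real.norm_eq_abs]
      have : |x^2| ≤ 1 := by
        rw [abs_pow]; exact pow_le_one₀ (abs_nonneg x) hxabs
      calc |x^2| * ‖ψβ ψ‖ ≤ 1 * ‖ψβ ψ‖ :=
            mul_le_mul_of_nonneg_right this (norm_nonneg _)
        _ = ‖ψβ ψ‖ := one_mul _
        _ ≤ I / 2 := hβle
    calc ‖ψG ψ x + x • ψα ψ + (x^2) • ψβ ψ‖
        ≤ ‖ψG ψ x‖ + ‖x • ψα ψ‖ + ‖(x^2) • ψβ ψ‖ := norm_add₃_le
      _ ≤ (7/2) * I := by linarith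
  have hbD1 : ∀ x ∈ Set.Icc (0:ℝ) 1, ‖ψφ₂ ψ x + ψα ψ‖ ≤ (7/2) * I := by
    intro x hx
    calc ‖ψφ₂ ψ x + ψα ψ‖ ≤ ‖ψφ₂ ψ x‖ + ‖ψα ψ‖ := norm_add_le _ _
      _ ≤ (7/2) * I := by linarith [hb2 x hx, hαle]
  have hderiv1 : deriv (ψφ₁ ψ) = fun x => ψφ₂ ψ x + ψα ψ :=
    funext fun x => (hD1 x).deriv
  have hderiv2 : deriv (ψφ₂ ψ) = fun x => ψ x + (2:ℝ) • ψβ ψ :=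
    funext fun x => (hD2 x).deriv
  refine ⟨⟨hper1, hper2, smooth1, smooth2⟩,
    periodic_norm_bound hper1 hb1,
    ?_,
    fun x => le_trans (periodic_norm_bound hper2 (fun y hy =>
      (hb2 y hy)) x) (by linarith),
    by linarith [hαle],
    by linarith [hβle],
    ?_⟩
  · intro x
    rw [hderiv1]
    exact periodic_norm_bound hperD1 hbD1 x
  -- the L^r bound
  · simp only [hderiv2]
    rw [intervalIntegral.integral_of_le zero_le_one,
      intervalIntegral.integral_of_le zero_le_one, one_div]
    set μ : Measure ℝ := volume.restrict (Set.Ioc (0:ℝ) 1) with hμdef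
    haveI : IsProbabilityMeasure μ := ⟨by
      rw [hμdef, Measure.restrict_apply_univ]
      simp⟩
    have hr0 : (0:ℝ) < r := lt_of_lt_of_le one_pos hr
    have her0 : (ENNReal.ofReal r) ≠ 0 := by
      simp only [ne_eq, ENNReal.ofReal_eq_zero, not_le]
      linarith
    have hone : (1:ℝ≥0∞) ≤ ENNReal.ofReal r := by
      rw [← ENNReal.ofReal_one]
      exact ENNReal.ofReal_le_ofReal hr
    obtain ⟨C, hC⟩ := (isCompact_Icc (a := (0:ℝ)) (b := 1)).exists_bound_of_continuousOn
      cψ.continuousOn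
    have haesm : AEStronglyMeasurable ψ μ := cψ.aestronglyMeasurable.restrict
    have haebound : ∀ᵐ x ∂μ, ‖ψ x‖ ≤ C := by
      rw [hμdef]
      rw [ae_restrict_iff' measurableSet_Ioc]
      exact Filter.Eventually.of_forall fun x hx => hC x ⟨hx.1.le, hx.2⟩
    have mem_r : MemLp ψ (ENNReal.ofReal r) μ := MemLp.of_bound haesm C haebound
    have mem_1 : MemLp ψ 1 μ := MemLp.of_bound haesm C haebound
    have memd : MemLp (fun x => ψ x + (2:ℝ) • ψβ ψ) (ENNReal.ofReal r) μ :=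
      mem_r.add (memLp_const _)
    -- chain of eLpNorm inequalities
    have s1 : eLpNorm (fun x => ψ x + (2:ℝ) • ψβ ψ) (ENNReal.ofReal r) μ
        ≤ eLpNorm ψ (ENNReal.ofReal r) μ
          + eLpNorm (fun _ : ℝ => (2:ℝ) • ψβ ψ) (ENNReal.ofReal r) μ :=
      eLpNorm_add_le haesm aestronglyMeasurable_const hone
    have s2 : eLpNorm (fun _ : ℝ => (2:ℝ) • ψβ ψ) (ENNReal.ofReal r) μ
        = ‖(2:ℝ) • ψβ ψ‖₊ := by
      rw [eLpNorm_const _ her0 (IsProbabilityMeasure.ne_zero μ)]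
      simp [measure_univ]
      exact enorm_eq_nnnorm _
    have s3 : (‖(2:ℝ) • ψβ ψ‖₊ : ℝ≥0∞) ≤ eLpNorm ψ (ENNReal.ofReal r) μ := by
      have h1 : (‖(2:ℝ) • ψβ ψ‖₊ : ℝ≥0∞) = ENNReal.ofReal ‖(2:ℝ) • ψβ ψ‖ :=
        (ofReal_norm _).symm
      have h2 : ENNReal.ofReal ‖(2:ℝ) • ψβ ψ‖ ≤ ENNReal.ofReal I :=
        ENNReal.ofReal_le_ofReal h2βle
      have h3 : ENNReal.ofReal I = eLpNorm ψ 1 μ := by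
        rw [eLpNorm_one_eq_lintegral_enorm, hIdef,
          intervalIntegral.integral_of_le zero_le_one]
        exact ofReal_integral_norm_eq_lintegral_enorm (memLp_one_iff_integrable.1 mem_1)
      have h4 : eLpNorm ψ 1 μ ≤ eLpNorm ψ (ENNReal.ofReal r) μ :=
        eLpNorm_le_eLpNorm_of_exponent_le hone haesm
      rw [h1]
      exact le_trans h2 (le_trans (le_of_eq h3) h4)
    have chain : eLpNorm (fun x => ψ x + (2:ℝ) • ψβ ψ) (ENNReal.ofReal r) μ
        ≤ 2 * eLpNorm ψ (ENNReal.ofReal r) μ := by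
      calc eLpNorm (fun x => ψ x + (2:ℝ) • ψβ ψ) (ENNReal.ofReal r) μ
          ≤ eLpNorm ψ (ENNReal.ofReal r) μ
            + eLpNorm (fun _ : ℝ => (2:ℝ) • ψβ ψ) (ENNReal.ofReal r) μ := s1
        _ ≤ eLpNorm ψ (ENNReal.ofReal r) μ + eLpNorm ψ (ENNReal.ofReal r) μ := by
            rw [s2]; exact add_le_add le_rfl s3
        _ = 2 * eLpNorm ψ (ENNReal.ofReal r) μ := (two_mul _).symm
    -- convert to real integrals
    have convd : eLpNorm (fun x => ψ x + (2:ℝ) • ψβ ψ) (ENNReal.ofReal r) μ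
        = ENNReal.ofReal ((∫ x, ‖ψ x + (2:ℝ) • ψβ ψ‖ ^ r ∂μ) ^ r⁻¹) := by
      have := memd.eLpNorm_eq_integral_rpow_norm her0 ENNReal.ofReal_ne_top
      rwa [ENNReal.toReal_ofReal hr0.le] at this
    have convp : eLpNorm ψ (ENNReal.ofReal r) μ
        = ENNReal.ofReal ((∫ x, ‖ψ x‖ ^ r ∂μ) ^ r⁻¹) := by
      have := mem_r.eLpNorm_eq_integral_rpow_norm her0 ENNReal.ofReal_ne_top
      rwa [ENNReal.toReal_ofReal hr0.le] at this
    rw [convd, convp] at chain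
    have h2e : (2 : ℝ≥0∞) * ENNReal.ofReal ((∫ x, ‖ψ x‖ ^ r ∂μ) ^ r⁻¹)
        = ENNReal.ofReal (2 * (∫ x, ‖ψ x‖ ^ r ∂μ) ^ r⁻¹) := by
      rw [ENNReal.ofReal_mul (by norm_num : (0:ℝ) ≤ 2)]
      norm_num
    rw [h2e] at chain
    have hrhs : (0:ℝ) ≤ 2 * (∫ x, ‖ψ x‖ ^ r ∂μ) ^ r⁻¹ := by positivity
    exact (ENNReal.ofReal_le_ofReal_iff hrhs).1 chain


end
end
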